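/- arXiv:1511.07419 — 2 statements merged into one kernel-verified Lean document; each statement's English description precedes it below -/
import Mathlib

section
/- Let (ε_n) be i.i.d. strictly positive random variables with essential infimum m > 1. If x < c·m/(m−1), then P(Z > x/c − 1) > 0, i.e., the survival probability ρ(x) = P(Z < x/c − 1) is strictly less than 1. -/
/-!
Put `t = x/c - 1`. Since `t < 1/(m-1) = ∑_{n≥1} m⁻ⁿ`, already a partial sum `∑_{n≤N} b⁻ⁿ`
with some `b > m` exceeds `t`. As `b` lies above the essential infimum, `ε_j ≤ b` has positive
probability, hence by independence so does the event `{ε_1, …, ε_N ≤ b}`; on that event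
`Z ≥ ∑_{n≤N} b⁻ⁿ > t`.
-/

open MeasureTheory ProbabilityTheory
open scoped ENNReal

/-- The random series `Z = ∑_{n≥1} (ε_1 ε_2 ⋯ ε_n)⁻¹` (with `ε j` playing the
role of `ε_{j+1}`), valued in `ℝ≥0∞` so that divergence is recorded as `∞`. -/
noncomputable def Z {Ω : Type*} (ε : ℕ → Ω → ℝ) (ω : Ω) : ℝ≥0∞ :=
  ∑' n : ℕ, ENNReal.ofReal ((∏ j ∈ Finset.range (n + 1), ε j ω)⁻¹)

open Filter Topology Finset

theorem hasSum_inv_pow_succ {m : ℝ} (hm : 1 < m) :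
    HasSum (fun n : ℕ => (m ^ (n + 1))⁻¹) (m - 1)⁻¹ := by
  have hm0 : 0 < m := zero_lt_one.trans hm
  have h := (hasSum_geometric_of_lt_one (inv_nonneg.2 hm0.le)
    (inv_lt_one_of_one_lt₀ hm)).mul_left m⁻¹
  rw [← mul_inv, mul_sub, mul_one, mul_inv_cancel₀ hm0.ne'] at h
  simpa only [← inv_pow, ← mul_inv, ← pow_succ'] using h

theorem exists_ofReal_lt_sum_inv_pow {m t : ℝ} (hm : 1 < m) (ht : t < (m - 1)⁻¹) :
    ∃ N : ℕ, ∃ b, m < b ∧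
      ENNReal.ofReal t < ENNReal.ofReal (∑ n ∈ range N, (b ^ (n + 1))⁻¹) := by
  have hm0 : m ≠ 0 := (zero_lt_one.trans hm).ne'
  have hlim : ENNReal.ofReal t < ENNReal.ofReal (m - 1)⁻¹ :=
    (ENNReal.ofReal_lt_ofReal_iff (inv_pos.2 (sub_pos.2 hm))).2 ht
  obtain ⟨N, hN⟩ := ((ENNReal.tendsto_ofReal
    (hasSum_inv_pow_succ hm).tendsto_sum_nat).eventually (lt_mem_nhds hlim)).exists
  have hcont : ContinuousAt
      (fun b : ℝ => ENNReal.ofReal (∑ n ∈ range N, (b ^ (n + 1))⁻¹)) m := by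
    refine ENNReal.continuous_ofReal.continuousAt.comp ?_
    fun_prop (disch := exact pow_ne_zero _ hm0)
  obtain ⟨b, hb, hbm⟩ :=
    ((hcont.eventually (lt_mem_nhds hN)).filter_mono nhdsWithin_le_nhds |>.and
      (self_mem_nhdsWithin : Set.Ioi m ∈ 𝓝[>] m)).exists
  exact ⟨N, b, hbm, hb⟩

theorem ofReal_sum_inv_pow_le_Z {Ω : Type*} {ε : ℕ → Ω → ℝ} {ω : Ω}
    (hpos : ∀ j, 0 < ε j ω) {b : ℝ} {N : ℕ} (hle : ∀ j < N, ε j ω ≤ b) :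
    ENNReal.ofReal (∑ n ∈ range N, (b ^ (n + 1))⁻¹) ≤ Z ε ω := by
  have hterm : ∀ n < N, (b ^ (n + 1))⁻¹ ≤ (∏ j ∈ range (n + 1), ε j ω)⁻¹ := fun n hn =>
    inv_anti₀ (prod_pos fun j _ => hpos j) <|
      (prod_le_prod (fun j _ => (hpos j).le) fun j hj => hle j (by grind)).trans_eq
        (by simp)
  rw [ENNReal.ofReal_sum_of_nonneg fun n hn =>
    inv_nonneg.2 (pow_nonneg ((hpos 0).le.trans (hle 0 (by grind))) _)]
  exact (sum_le_sum fun n hn => ENNReal.ofReal_le_ofReal (hterm n (mem_range.1 hn))).trans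
    (ENNReal.sum_le_tsum _)

theorem nonempty_setOf_measure_le_pos {Ω : Type*} [MeasurableSpace Ω] {μ : Measure Ω}
    [NeZero μ] (X : Ω → ℝ) : {z : ℝ | 0 ≤ z ∧ 0 < μ {ω | X ω ≤ z}}.Nonempty := by
  by_contra h
  have hnull : ∀ n : ℕ, μ {ω | X ω ≤ n} = 0 := fun n =>
    nonpos_iff_eq_zero.1 (not_lt.1 fun hn => h ⟨n, n.cast_nonneg, hn⟩)
  have hcover : (⋃ n : ℕ, {ω | X ω ≤ n}) = Set.univ :=
    Set.iUnion_eq_univ_iff.2 fun ω => exists_nat_ge (X ω)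
  exact NeZero.ne μ <| Measure.measure_univ_eq_zero.1 <| hcover ▸ measure_iUnion_null hnull

theorem measure_le_pos_of_sInf_lt {Ω : Type*} [MeasurableSpace Ω] {μ : Measure Ω}
    [NeZero μ] {X : Ω → ℝ} {b : ℝ} (hb : sInf {z : ℝ | 0 ≤ z ∧ 0 < μ {ω | X ω ≤ z}} < b) :
    0 < μ {ω | X ω ≤ b} := by
  obtain ⟨z, hz, hzb⟩ := exists_lt_of_csInf_lt (nonempty_setOf_measure_le_pos X) hb
  exact hz.2.trans_le (measure_mono fun ω (hω : X ω ≤ z) => hω.trans hzb.le)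

theorem measure_biInter_preimage_Iic_pos {Ω : Type*} [MeasurableSpace Ω] {μ : Measure Ω}
    {ε : ℕ → Ω → ℝ} (hindep : iIndepFun ε μ) (hident : ∀ n, IdentDistrib (ε n) (ε 0) μ μ)
    {b : ℝ} (hb : 0 < μ {ω | ε 0 ω ≤ b}) (N : ℕ) :
    0 < μ (⋂ j ∈ range N, ε j ⁻¹' Set.Iic b) := by
  rw [hindep.measure_inter_preimage_eq_mul (range N) (sets := fun _ => Set.Iic b)
    fun _ _ => measurableSet_Iic]
  refine pos_iff_ne_zero.2 (prod_ne_zero_iff.2 fun j _ => ?_)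
  rw [(hident j).measure_mem_eq measurableSet_Iic]
  exact hb.ne'

theorem measure_lt_one_of_disjoint {Ω : Type*} [MeasurableSpace Ω] {μ : Measure Ω}
    [IsProbabilityMeasure μ] {s A : Set Ω} (hA : NullMeasurableSet A μ) (hApos : 0 < μ A)
    (hdisj : Disjoint s A) : μ s < 1 := by
  calc μ s ≤ μ Aᶜ := measure_mono hdisj.subset_compl_right
    _ = 1 - μ A := prob_compl_eq_one_sub₀ hA
    _ < 1 := ENNReal.sub_lt_self ENNReal.one_ne_top one_ne_zero hApos.ne'

theorem rho_lt_one_of_small_x_general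
    {Ω : Type*} [MeasurableSpace Ω] (μ : Measure Ω) [IsProbabilityMeasure μ]
    (ε : ℕ → Ω → ℝ)
    (hpos : ∀ n ω, 0 < ε n ω)
    (hindep : iIndepFun ε μ)
    (hident : ∀ n, IdentDistrib (ε n) (ε 0) μ μ)
    (m : ℝ) (hm : m = sInf {z : ℝ | 0 ≤ z ∧ 0 < μ {ω | ε 0 ω ≤ z}})
    (hm1 : 1 < m)
    (x c : ℝ) (hc : 0 < c) (hx : x < c * m / (m - 1)) :
    0 < μ {ω | ENNReal.ofReal (x / c - 1) < Z ε ω} ∧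
      μ {ω | Z ε ω < ENNReal.ofReal (x / c - 1)} < 1 := by
  have ht : x / c - 1 < (m - 1)⁻¹ := by
    have hm' : m / (m - 1) - 1 = (m - 1)⁻¹ := by
      rw [div_sub_one (sub_pos.2 hm1).ne', sub_sub_cancel, one_div]
    rwa [← hm', sub_lt_sub_iff_right, div_lt_iff₀' hc, ← mul_div_assoc]
  obtain ⟨N, b, hmb, htb⟩ := exists_ofReal_lt_sum_inv_pow hm1 ht
  set A := ⋂ j ∈ range N, ε j ⁻¹' Set.Iic b
  have hA : 0 < μ A :=
    measure_biInter_preimage_Iic_pos hindep hident (measure_le_pos_of_sInf_lt (hm ▸ hmb)) N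
  have hAsub : A ⊆ {ω | ENNReal.ofReal (x / c - 1) < Z ε ω} := fun ω hω =>
    htb.trans_le <| ofReal_sum_inv_pow_le_Z (hpos · ω) fun j hj =>
      Set.mem_iInter₂.1 hω j (mem_range.2 hj)
  refine ⟨hA.trans_le (measure_mono hAsub), measure_lt_one_of_disjoint ?_ hA ?_⟩
  · exact (range N).nullMeasurableSet_biInter fun j _ =>
      (hident j).aemeasurable_fst.nullMeasurable measurableSet_Iic
  · exact Set.disjoint_of_subset_right hAsub <|
      Set.disjoint_left.2 fun _ hs hu => lt_asymm (α := ℝ≥0∞) hs hu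

/-- If the essential infimum `m` of `ε₁` exceeds `1` and `x < c·m/(m-1)`, then
`P(Z > x/c - 1) > 0`, i.e. the survival probability `ρ(x) = P(Z < x/c - 1)` is
strictly less than `1`. -/
theorem rho_lt_one_of_small_x
    {Ω : Type*} [MeasurableSpace Ω] (μ : Measure Ω) [IsProbabilityMeasure μ]
    (ε : ℕ → Ω → ℝ) (hmeas : ∀ n, Measurable (ε n))
    (hpos : ∀ n ω, 0 < ε n ω)
    (hindep : iIndepFun ε μ)
    (hident : ∀ n, IdentDistrib (ε n) (ε 0) μ μ)
    (m : ℝ) (hm : m = sInf {z : ℝ | 0 ≤ z ∧ 0 < μ {ω | ε 0 ω ≤ z}})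
    (hm1 : 1 < m)
    (x c : ℝ) (hc : 0 < c) (hx : x < c * m / (m - 1)) :
    0 < μ {ω | ENNReal.ofReal (x / c - 1) < Z ε ω} ∧
      μ {ω | Z ε ω < ENNReal.ofReal (x / c - 1)} < 1 :=
  rho_lt_one_of_small_x_general μ ε hpos hindep hident m hm hm1 x c hc hx
end

section
/- Let (ε_n) be i.i.d. strictly positive random variables with E log ε_1 > 0 and essential supremum M > 1. Then the essential infimum d_1 of Z = ∑_{n≥1}(ε_1⋯ε_n)^{−1} equals 1/(M−1): that is, Z ≥ 1/(M−1) a.s., and for every θ > 0, P(Z ≤ 1/(M−θ−1)) > 0 whenever M − θ > 1. -/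
/-
Since `ε_n ≤ M` almost surely, the `n`-th term of `Z` is at least `M⁻ⁿ`, whence `Z ≥ 1/(M-1)`.
Conversely fix `1 < c < M`. By the strong law, `(1/n) ∑ log ε_i → E log ε_1 > 0`, so `Z < ∞` a.s.
and `P(Z ≤ R) > 0` for some `R`. Splitting off the first `N` factors,
`Z = ∑_{n ≤ N} (ε_1⋯ε_n)⁻¹ + (ε_1⋯ε_N)⁻¹ Z_N`, where `Z_N` is the same series for the shifted
sequence: it has the law of `Z` and is independent of `ε_1, …, ε_N`. On the event
`{ε_1, …, ε_N ≥ c} ∩ {Z_N ≤ R}`, of positive probability, `Z ≤ 1/(c-1) + c⁻ᴺ R`, which is below any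
given bound `> 1/(c-1)` once `N` is large.
-/

open MeasureTheory ProbabilityTheory
open scoped ENNReal

open Filter Set Finset Topology

lemma ofReal_one_div_sub_one_eq_tsum {c : ℝ} (hc : 1 < c) :
    ENNReal.ofReal (1 / (c - 1)) = ∑' n : ℕ, ENNReal.ofReal (c⁻¹ ^ (n + 1)) := by
  have h0 : 0 ≤ c⁻¹ := by positivity
  have h1 : c⁻¹ < 1 := inv_lt_one_of_one_lt₀ hc
  rw [← ENNReal.ofReal_tsum_of_nonneg (fun n => by positivity)
    ((summable_nat_add_iff 1).2 (summable_geometric_of_lt_one h0 h1))]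
  congr 1
  simp_rw [pow_succ', tsum_mul_left, tsum_geometric_of_lt_one h0 h1]
  field_simp

lemma pow_le_prod_range {x : ℕ → ℝ} {c : ℝ} (hc : 0 ≤ c) {n : ℕ} (h : ∀ j < n, c ≤ x j) :
    c ^ n ≤ ∏ j ∈ range n, x j := by
  simpa using Finset.prod_le_prod (fun _ _ => hc) fun j hj => h j (mem_range.1 hj)

lemma ofReal_inv_prod_range_le {x : ℕ → ℝ} {c : ℝ} (hc : 0 < c) {n : ℕ} (h : ∀ j < n, c ≤ x j) :
    ENNReal.ofReal ((∏ j ∈ range n, x j)⁻¹) ≤ ENNReal.ofReal (c⁻¹ ^ n) :=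
  ENNReal.ofReal_le_ofReal (inv_pow c n ▸ inv_anti₀ (by positivity) (pow_le_prod_range hc.le h))

section Deterministic

variable {Ω : Type*} {ε : ℕ → Ω → ℝ} {ω : Ω}

lemma ofReal_one_div_sub_one_le_Z {M : ℝ} (hM : 1 < M) (hpos : ∀ n, 0 < ε n ω)
    (hle : ∀ n, ε n ω ≤ M) : ENNReal.ofReal (1 / (M - 1)) ≤ Z ε ω := by
  rw [ofReal_one_div_sub_one_eq_tsum hM]
  refine ENNReal.tsum_le_tsum fun n => ENNReal.ofReal_le_ofReal ?_
  have hprod : ∏ j ∈ range (n + 1), ε j ω ≤ M ^ (n + 1) := by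
    simpa using Finset.prod_le_prod (s := range (n + 1)) (fun j _ => (hpos j).le)
      fun j _ => hle j
  rw [inv_pow]
  exact inv_anti₀ (prod_pos fun j _ => hpos j) hprod

lemma Z_eq_sum_add_mul_Z_shift (N : ℕ) (hN : 0 ≤ ∏ j ∈ range N, ε j ω) :
    Z ε ω = ∑ n ∈ range N, ENNReal.ofReal ((∏ j ∈ range (n + 1), ε j ω)⁻¹)
      + ENNReal.ofReal ((∏ j ∈ range N, ε j ω)⁻¹) * Z (fun j => ε (N + j)) ω := by
  rw [Z, ← ENNReal.summable.sum_add_tsum_nat_add' (k := N), Z, ← ENNReal.tsum_mul_left]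
  congr 2 with n
  rw [add_right_comm, add_comm (n + 1) N, prod_range_add, mul_inv,
    ENNReal.ofReal_mul (inv_nonneg.2 hN)]

lemma Z_le_ofReal_add_mul_Z_shift {c : ℝ} (hc : 1 < c) (N : ℕ) (hle : ∀ j < N, c ≤ ε j ω) :
    Z ε ω ≤ ENNReal.ofReal (1 / (c - 1))
      + ENNReal.ofReal (c⁻¹ ^ N) * Z (fun j => ε (N + j)) ω := by
  have hc0 : 0 < c := by linarith
  rw [Z_eq_sum_add_mul_Z_shift N ((pow_pos hc0 N).le.trans (pow_le_prod_range hc0.le hle))]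
  gcongr ?_ + ?_ * _
  · rw [ofReal_one_div_sub_one_eq_tsum hc]
    refine (sum_le_sum fun n hn => ?_).trans (ENNReal.sum_le_tsum _)
    exact ofReal_inv_prod_range_le hc0 fun j hj => hle j (by have := mem_range.1 hn; omega)
  · exact ofReal_inv_prod_range_le hc0 hle

lemma Z_lt_top_of_tendsto_mean_log (hpos : ∀ n, 0 < ε n ω) {m : ℝ} (hm : 0 < m)
    (h : Tendsto (fun n : ℕ => (∑ i ∈ range n, Real.log (ε i ω)) / n) atTop (𝓝 m)) :
    Z ε ω < ∞ := by
  set r := Real.exp (-(m / 2))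
  have hr : r < 1 := Real.exp_lt_one_iff.2 (by linarith)
  have hbound : ∀ᶠ n : ℕ in atTop, ‖(∏ j ∈ range (n + 1), ε j ω)⁻¹‖ ≤ r ^ n := by
    filter_upwards [((tendsto_add_atTop_iff_nat 1).2 h).eventually
      (eventually_gt_nhds (half_lt_self hm))] with n hn
    have hn1 : (0 : ℝ) < (n + 1 : ℕ) := by positivity
    rw [lt_div_iff₀ hn1] at hn
    have hprod : ∏ j ∈ range (n + 1), ε j ω
        = Real.exp (∑ i ∈ range (n + 1), Real.log (ε i ω)) := by
      rw [Real.exp_sum]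
      exact prod_congr rfl fun j _ => (Real.exp_log (hpos j)).symm
    rw [hprod, Real.norm_of_nonneg (by positivity), ← Real.exp_neg, ← Real.exp_nat_mul]
    refine Real.exp_le_exp.2 ?_
    push_cast at hn
    nlinarith
  have hsum := Summable.of_norm_bounded_eventually_nat
    (summable_geometric_of_lt_one (Real.exp_pos _).le hr) hbound
  rw [Z, ← ENNReal.ofReal_tsum_of_nonneg (fun n => (inv_pos.2 (prod_pos fun j _ => hpos j)).le)
    hsum]
  exact ENNReal.ofReal_lt_top

end Deterministic

lemma MeasurableSpace.comap_pi_eq_iSup {Ω ι : Type*} {β : ι → Type*}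
    [∀ i, MeasurableSpace (β i)] (f : ∀ i, Ω → β i) :
    MeasurableSpace.comap (fun ω i => f i ω) MeasurableSpace.pi
      = ⨆ i, MeasurableSpace.comap (f i) inferInstance := by
  simp_rw [MeasurableSpace.pi, MeasurableSpace.comap_iSup, MeasurableSpace.comap_comp]
  rfl

section Probability

variable {Ω : Type*} [MeasurableSpace Ω] {μ : Measure Ω}

lemma ProbabilityTheory.iIndepFun.indepFun_init_shift {β : Type*} [MeasurableSpace β]
    {f : ℕ → Ω → β} (hf : ∀ i, Measurable (f i)) (h : iIndepFun f μ) (N : ℕ) :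
    IndepFun (fun ω (i : Fin N) => f i ω) (fun ω j => f (N + j) ω) μ := by
  let m : ℕ → MeasurableSpace Ω := fun i => MeasurableSpace.comap (f i) inferInstance
  have hindep : Indep (⨆ j ∈ Set.Iio N, m j) (⨆ j ∈ Set.Ici N, m j) μ :=
    indep_iSup_of_disjoint (fun i => (hf i).comap_le) h.iIndep
      (Set.disjoint_left.2 fun i (hi : i < N) (hi' : N ≤ i) => hi.not_ge hi')
  refine (IndepFun_iff_Indep _ _ _).2 (indep_of_indep_of_le_right
    (indep_of_indep_of_le_left hindep ?_) ?_) <;>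
    rw [MeasurableSpace.comap_pi_eq_iSup (β := fun _ => β)] <;>
    refine iSup_le fun i => le_biSup m ?_
  · exact Fin.is_lt i
  · exact Nat.le_add_right N i

lemma exists_nat_measure_le_pos [NeZero μ] {f : Ω → ℝ≥0∞} (hf : ∀ᵐ ω ∂μ, f ω < ∞) :
    ∃ n : ℕ, 0 < μ {ω | f ω ≤ n} := by
  by_contra! h
  have hgt : ∀ᵐ ω ∂μ, ∀ n : ℕ, ¬ f ω ≤ n :=
    ae_all_iff.2 fun n => measure_eq_zero_iff_ae_notMem.1 (nonpos_iff_eq_zero.1 (h n))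
  have hfalse : ∀ᵐ ω ∂μ, False := by
    filter_upwards [hf, hgt] with ω hlt hgt
    obtain ⟨n, hn⟩ := ENNReal.exists_nat_gt hlt.ne
    exact hgt n hn.le
  exact NeZero.ne μ (ae_eq_bot.1 (eventually_false_iff_eq_bot.1 hfalse))

lemma ae_le_sSup_of_bddAbove {X : Ω → ℝ}
    (hbdd : BddAbove {z : ℝ | 0 ≤ z ∧ 0 < μ {ω | z ≤ X ω}}) :
    ∀ᵐ ω ∂μ, X ω ≤ sSup {z : ℝ | 0 ≤ z ∧ 0 < μ {ω | z ≤ X ω}} := by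
  set M := sSup {z : ℝ | 0 ≤ z ∧ 0 < μ {ω | z ≤ X ω}}
  have hM : 0 ≤ M := Real.sSup_nonneg fun z hz => hz.1
  have hnull : ∀ z, M < z → μ {ω | z ≤ X ω} = 0 := fun z hz => by
    by_contra h
    exact hz.not_ge (le_csSup hbdd ⟨hM.trans hz.le, pos_iff_ne_zero.2 h⟩)
  have hrat : ∀ᵐ ω ∂μ, ∀ q : ℚ, M < q → X ω < q := by
    refine ae_all_iff.2 fun q => ?_
    by_cases hq : M < q
    · filter_upwards [measure_eq_zero_iff_ae_notMem.1 (hnull q hq)] with ω hω _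
      exact not_le.1 hω
    · exact ae_of_all _ fun ω h => absurd h hq
  filter_upwards [hrat] with ω hω using le_of_forall_lt_rat_imp_le fun q hq => (hω q hq).le

lemma measure_le_pos_of_lt_sSup {X : Ω → ℝ} {c : ℝ} (hc : 0 ≤ c)
    (hlt : c < sSup {z : ℝ | 0 ≤ z ∧ 0 < μ {ω | z ≤ X ω}}) : 0 < μ {ω | c ≤ X ω} := by
  have hne : {z : ℝ | 0 ≤ z ∧ 0 < μ {ω | z ≤ X ω}}.Nonempty := by
    by_contra h
    rw [Set.not_nonempty_iff_eq_empty.1 h, Real.sSup_empty] at hlt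
    linarith
  obtain ⟨z, ⟨-, hz⟩, hcz⟩ := exists_lt_of_lt_csSup hne hlt
  exact hz.trans_le (measure_mono fun ω (hω : z ≤ X ω) => hcz.le.trans hω)

section Series

variable {ε : ℕ → Ω → ℝ}

lemma measurable_Z (hmeas : ∀ n, Measurable (ε n)) : Measurable (Z ε) :=
  Measurable.tsum fun _ => ENNReal.measurable_ofReal.comp <|
    (Finset.measurable_prod _ fun j _ => hmeas j).inv

lemma identDistrib_Z_shift (hindep : iIndepFun ε μ)
    (hident : ∀ n, IdentDistrib (ε n) (ε 0) μ μ) (N : ℕ) :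
    IdentDistrib (Z fun j => ε (N + j)) (Z ε) μ μ :=
  (IdentDistrib.pi (fun j => (hident (N + j)).trans (hident j).symm)
    (hindep.precomp (add_right_injective N)) hindep).comp
    (measurable_Z (ε := fun j (v : ℕ → ℝ) => v j) measurable_pi_apply)

lemma ae_Z_lt_top (hpos : ∀ n ω, 0 < ε n ω) (hindep : iIndepFun ε μ)
    (hident : ∀ n, IdentDistrib (ε n) (ε 0) μ μ)
    (hint : Integrable (fun ω => Real.log (ε 0 ω)) μ) (hE : 0 < ∫ ω, Real.log (ε 0 ω) ∂μ) :
    ∀ᵐ ω ∂μ, Z ε ω < ∞ := by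
  have hslln := strong_law_ae_real (fun i ω => Real.log (ε i ω)) hint
    (fun i j hij => (hindep.indepFun hij).comp Real.measurable_log Real.measurable_log)
    (fun i => (hident i).comp Real.measurable_log)
  filter_upwards [hslln] with ω hω using Z_lt_top_of_tendsto_mean_log (hpos · ω) hE hω

lemma measure_Z_le_pos (hmeas : ∀ n, Measurable (ε n)) (hindep : iIndepFun ε μ)
    (hident : ∀ n, IdentDistrib (ε n) (ε 0) μ μ) {c : ℝ} (hc : 1 < c)
    (hcpos : 0 < μ {ω | c ≤ ε 0 ω}) {R : ℝ≥0∞} (hR : 0 < μ {ω | Z ε ω ≤ R}) (N : ℕ) :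
    0 < μ {ω | Z ε ω ≤ ENNReal.ofReal (1 / (c - 1)) + ENNReal.ofReal (c⁻¹ ^ N) * R} := by
  set A := (fun ω (i : Fin N) => ε i ω) ⁻¹' Set.univ.pi fun _ => Ici c
  set B := {ω | Z (fun j => ε (N + j)) ω ≤ R}
  have hA : 0 < μ A := by
    rw [show A = ⋂ i : Fin N, ε i ⁻¹' Ici c by ext; simp [A, Pi.le_def],
      (hindep.precomp Fin.val_injective).meas_iInter fun i => ⟨Ici c, measurableSet_Ici, rfl⟩]
    refine CanonicallyOrderedAdd.prod_pos.2 fun i _ => ?_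
    rw [(hident i).measure_mem_eq measurableSet_Ici]
    exact hcpos
  have hB : μ B = μ {ω | Z ε ω ≤ R} :=
    (identDistrib_Z_shift hindep hident N).measure_mem_eq measurableSet_Iic
  have hAB : μ (A ∩ B) = μ A * μ B :=
    (hindep.indepFun_init_shift hmeas N).measure_inter_preimage_eq_mul _ _
      (MeasurableSet.univ_pi fun _ => measurableSet_Ici)
      (measurable_Z (fun j => measurable_pi_apply j) measurableSet_Iic)
  refine (hAB ▸ ENNReal.mul_pos hA.ne' (hB ▸ hR).ne').trans_le (measure_mono ?_)
  rintro ω ⟨hωA, hωB⟩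
  calc Z ε ω
      ≤ ENNReal.ofReal (1 / (c - 1)) + ENNReal.ofReal (c⁻¹ ^ N) * Z (fun j => ε (N + j)) ω :=
        Z_le_ofReal_add_mul_Z_shift hc N fun j hj => hωA ⟨j, hj⟩ trivial
    _ ≤ _ := by gcongr; exact hωB

end Series

end Probability

/-- If `E log ε₁ > 0` and the essential supremum `M` of `ε₁` is finite with
`M > 1`, then the essential infimum `d₁` of `Z` equals `1/(M-1)`: namely
`Z ≥ 1/(M-1)` a.s., and for every `θ > 0` with `M - θ > 1` one has
`P(Z ≤ 1/(M-θ-1)) > 0`. -/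
theorem essInf_Z_eq
    {Ω : Type*} [MeasurableSpace Ω] (μ : Measure Ω) [IsProbabilityMeasure μ]
    (ε : ℕ → Ω → ℝ) (hmeas : ∀ n, Measurable (ε n))
    (hpos : ∀ n ω, 0 < ε n ω)
    (hindep : iIndepFun ε μ)
    (hident : ∀ n, IdentDistrib (ε n) (ε 0) μ μ)
    (hint : Integrable (fun ω => Real.log (ε 0 ω)) μ)
    (hE : 0 < ∫ ω, Real.log (ε 0 ω) ∂μ)
    (M : ℝ) (hM : M = sSup {z : ℝ | 0 ≤ z ∧ 0 < μ {ω | z ≤ ε 0 ω}})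
    (hMbdd : BddAbove {z : ℝ | 0 ≤ z ∧ 0 < μ {ω | z ≤ ε 0 ω}})
    (hM1 : 1 < M) :
    (∀ᵐ ω ∂μ, ENNReal.ofReal (1 / (M - 1)) ≤ Z ε ω) ∧
      ∀ θ : ℝ, 0 < θ → 1 < M - θ →
        0 < μ {ω | Z ε ω ≤ ENNReal.ofReal (1 / (M - θ - 1))} := by
  refine ⟨?_, fun θ hθ hMθ => ?_⟩
  · have hle : ∀ᵐ ω ∂μ, ∀ n, ε n ω ≤ M := ae_all_iff.2 fun n =>
      (hident n).symm.ae_snd measurableSet_Iic (hM ▸ ae_le_sSup_of_bddAbove hMbdd)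
    filter_upwards [hle] with ω hω using ofReal_one_div_sub_one_le_Z hM1 (hpos · ω) hω
  set c := M - θ / 2 with hc_def
  have hc : 1 < c := by linarith
  have hcpos : 0 < μ {ω | c ≤ ε 0 ω} :=
    measure_le_pos_of_lt_sSup (by linarith) (hM ▸ by linarith)
  obtain ⟨R, hR⟩ := exists_nat_measure_le_pos (ae_Z_lt_top hpos hindep hident hint hE)
  have hlim : Tendsto (fun N : ℕ => ENNReal.ofReal (1 / (c - 1)) + ENNReal.ofReal (c⁻¹ ^ N) * R)
      atTop (𝓝 (ENNReal.ofReal (1 / (c - 1)))) := by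
    have hpow := ENNReal.tendsto_ofReal
      (tendsto_pow_atTop_nhds_zero_of_lt_one (by positivity) (inv_lt_one_of_one_lt₀ hc))
    simpa using tendsto_const_nhds.add
      (ENNReal.Tendsto.mul_const hpow (Or.inr (ENNReal.natCast_ne_top R)))
  have hlt : ENNReal.ofReal (1 / (c - 1)) < ENNReal.ofReal (1 / (M - θ - 1)) :=
    (ENNReal.ofReal_lt_ofReal_iff (by positivity)).2
      (one_div_lt_one_div_of_lt (by linarith) (by linarith))
  obtain ⟨N, hN⟩ := (hlim.eventually (gt_mem_nhds hlt)).exists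
  exact (measure_Z_le_pos hmeas hindep hident hc hcpos hR N).trans_le
    (measure_mono fun ω hω => le_trans hω hN.le)
end
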